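/- arXiv:2412.03540 — 3 statements merged into one kernel-verified Lean document; each statement's English description precedes it below -/
import Mathlib

section
/- Let X be a finite set, λ : X → [0,1], let H ⊆ X with a fixed ordering h_1, …, h_{|H|} of its elements such that λ(h_1) ≥ λ(h_2) ≥ … ≥ λ(h_{|H|}), and let W ⊆ X. Then, for b = b(W,H,λ), we have |H_{<b} ∩ W| ≤ (1/2)|H_{<b}|. -/
open Finset

variable {α : Type*}

/-- `wsum lam S = ∑_{x ∈ S} lam x`. -/
noncomputable def wsum (lam : α → ℝ) (S : Finset α) : ℝ := ∑ x ∈ S, lam x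

/-- Probability that the random subset `X_q` equals `W`. -/
noncomputable def prb [Fintype α] (q : ℝ) (W : Finset α) : ℝ :=
  q ^ W.card * (1 - q) ^ (Fintype.card α - W.card)

/-- `G` is a cover of the family `ℋ`. -/
def IsCover (G ℋ : Finset (Finset α)) : Prop := ∀ H ∈ ℋ, ∃ B ∈ G, B ⊆ H

/-- `ℋ` is `p`-small. -/
def IsSmall (p : ℝ) (ℋ : Finset (Finset α)) : Prop :=
  ∃ G : Finset (Finset α), IsCover G ℋ ∧ ∑ B ∈ G, p ^ B.card ≤ 1 / 2

/-- `l` is an ordering of `H` with weights `lam` in non-increasing order. -/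
def IsOrdering [DecidableEq α] (lam : α → ℝ) (H : Finset α) (l : List α) : Prop :=
  l.Nodup ∧ l.toFinset = H ∧ l.Pairwise fun a b => lam b ≤ lam a

/-- The cut index: the smallest number `k` of removed top elements so that
`lam (W ∩ H_{≥ k+1}) ≥ (1/2) lam (H_{≥ k+1})`.  (So `b(W,H,λ) = cutIndex + 1`.) -/
noncomputable def cutIndex [DecidableEq α] (lam : α → ℝ) (W : Finset α) (l : List α) : ℕ :=
  sInf {k : ℕ | (1 / 2) * wsum lam (l.drop k).toFinset ≤ wsum lam (W ∩ (l.drop k).toFinset)}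

/-- One step of the procedure: `H_{i+1} = (H_i)_{≥ b_i} \ W_i`, as ordered lists. -/
noncomputable def stepList [DecidableEq α] (lam : α → ℝ) (W : Finset α) (l : List α) : List α :=
  (l.drop (cutIndex lam W l)).filter fun x => decide (x ∉ W)

/-- The procedure: `procList lam Ws l0 i` is (the ordered list of) `H_{i+1}`, `H_1 = l0`. -/
noncomputable def procList [DecidableEq α] (lam : α → ℝ) (Ws : ℕ → Finset α) (l0 : List α) :
    ℕ → List α
  | 0 => l0
  | i + 1 => stepList lam (Ws i) (procList lam Ws l0 i)

/-- `bIdx lam Ws l0 i = b(W_{i+1}, H_{i+1}, lam) - 1` (0-indexed version of `b_i`). -/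
noncomputable def bIdx [DecidableEq α] (lam : α → ℝ) (Ws : ℕ → Finset α) (l0 : List α)
    (i : ℕ) : ℕ :=
  cutIndex lam (Ws i) (procList lam Ws l0 i)

/-- `Rfrag lam Ws l0 i = R_{i+1}(W, H) = (H_{i+1})_{< b_{i+1}}` (0-indexed). -/
noncomputable def Rfrag [DecidableEq α] (lam : α → ℝ) (Ws : ℕ → Finset α) (l0 : List α)
    (i : ℕ) : Finset α :=
  ((procList lam Ws l0 i).take (bIdx lam Ws l0 i)).toFinset

/-- Extend a tuple indexed by `Fin s` to one indexed by `ℕ`. -/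
def extT {s : ℕ} (Ws : Fin s → Finset α) : ℕ → Finset α :=
  fun i => if h : i < s then Ws ⟨i, h⟩ else ∅

/-- `Z` is `(b, t)`-feasible: there are `W'_i ⊆ Z_i` with `|W'_i| = |Z_i| - t_i` and `H' ∈ ℋ`
such that `b = b(W', H')` and `Z_i ⊇ R_i(W', H')` for all `i`. -/
def Feasible [DecidableEq α] (ℋ : Finset (Finset α)) (lam : Finset α → α → ℝ)
    (ord : Finset α → List α) {s : ℕ} (b t : Fin s → ℕ) (Z : Fin s → Finset α) : Prop :=
  ∃ (W' : Fin s → Finset α) (H' : Finset α), H' ∈ ℋ ∧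
    (∀ i : Fin s, W' i ⊆ Z i ∧ (W' i).card = (Z i).card - t i) ∧
    (∀ i : Fin s, b i = bIdx (lam H') (extT W') (ord H') i) ∧
    (∀ i : Fin s, Rfrag (lam H') (extT W') (ord H') i ⊆ Z i)

/-- `T` is a tower of fragments of `(Ws, H)`. -/
def IsTower [DecidableEq α] (ℋ : Finset (Finset α)) (lam : Finset α → α → ℝ)
    (ord : Finset α → List α) {s : ℕ} (Ws : Fin s → Finset α) (H : Finset α)
    (T : Fin s → Finset α) : Prop :=
  (∃ b : Fin s → ℕ,
      Feasible ℋ lam ord b (fun i => (T i).card) (fun i => Ws i ∪ T i)) ∧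
    univ.biUnion T ⊆ H

/-- Lexicographic order on size vectors. -/
def lexLe {s : ℕ} (a c : Fin s → ℕ) : Prop :=
  a = c ∨ ∃ i : Fin s, a i < c i ∧ ∀ j : Fin s, j < i → a j = c j

/-- `T` is a minimum tower of fragments of `(Ws, H)`. -/
def IsMinTower [DecidableEq α] (ℋ : Finset (Finset α)) (lam : Finset α → α → ℝ)
    (ord : Finset α → List α) {s : ℕ} (Ws : Fin s → Finset α) (H : Finset α)
    (T : Fin s → Finset α) : Prop :=
  IsTower ℋ lam ord Ws H T ∧
    ∀ T' : Fin s → Finset α, IsTower ℋ lam ord Ws H T' →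
      lexLe (fun i => (T i).card) (fun i => (T' i).card)

/-- `(W_1, …, W_s)` is bad: no `H ∈ ℋ` captures weight at least `1 - 2^{-s}`. -/
def IsBad [DecidableEq α] (ℋ : Finset (Finset α)) (lam : Finset α → α → ℝ) {s : ℕ}
    (Ws : Fin s → Finset α) : Prop :=
  ∀ H ∈ ℋ, wsum (lam H) (univ.biUnion Ws ∩ H) < 1 - (1 / 2) ^ s

open scoped Classical

/-!
Write `±` for the sign `+1` on `W` and `-1` off `W`. By minimality of the cut index `k`, every
nonempty suffix of the prefix `l.take k` has negative `λ`-weighted signed sum. If some suffix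
had positive balance `∑ ±1`, take the shortest suffix `x :: L` where the balance first becomes
positive: then `x ∈ W` and every prefix of `L` has balance `≥ 0`, so Abel summation against the
non-increasing weights gives `∑_L ±λ ≥ 0`, hence `∑_{x :: L} ±λ ≥ λ x ≥ 0`, a contradiction.
-/

section SignedSum

variable {α : Type*} [DecidableEq α] (W : Finset α)

noncomputable def signedSum (f : α → ℝ) (L : List α) : ℝ :=
  (L.map fun x => if x ∈ W then f x else -f x).sum

variable {W}

@[simp]
lemma signedSum_nil (f : α → ℝ) : signedSum W f [] = 0 := rfl

@[simp]
lemma signedSum_cons (f : α → ℝ) (x : α) (L : List α) :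
    signedSum W f (x :: L) = (if x ∈ W then f x else -f x) + signedSum W f L := by
  simp [signedSum]

lemma signedSum_append (f : α → ℝ) (L₁ L₂ : List α) :
    signedSum W f (L₁ ++ L₂) = signedSum W f L₁ + signedSum W f L₂ := by
  simp [signedSum]

lemma signedSum_take_add_drop (f : α → ℝ) (L : List α) (m : ℕ) :
    signedSum W f (L.take m) + signedSum W f (L.drop m) = signedSum W f L := by
  rw [← signedSum_append, List.take_append_drop]

lemma signedSum_eq_of_nodup (f : α → ℝ) {L : List α} (hL : L.Nodup) :
    signedSum W f L = 2 * ∑ x ∈ L.toFinset ∩ W, f x - ∑ x ∈ L.toFinset, f x := by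
  rw [signedSum, ← List.sum_toFinset _ hL, Finset.sum_ite, Finset.sum_neg_distrib,
    ← Finset.sum_filter_add_sum_filter_not L.toFinset (· ∈ W) f, Finset.filter_mem_eq_inter]
  ring

-- Abel summation against the non-increasing weights `f`; the offset `t` makes the induction go.
lemma signedSum_nonneg_of_take {f : α → ℝ} {L : List α}
    (hsort : L.Pairwise fun a b => f b ≤ f a) (hf : ∀ x ∈ L, 0 ≤ f x) {t c : ℝ}
    (ht : ∀ m, 0 ≤ t + signedSum W 1 (L.take m)) (hc : ∀ x ∈ L, f x ≤ c) (hc0 : 0 ≤ c) :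
    0 ≤ t * c + signedSum W f L := by
  induction L generalizing t c with
  | nil => simpa using mul_nonneg (by simpa using ht 0) hc0
  | cons x L ih =>
    obtain ⟨hxL, hsortL⟩ := List.pairwise_cons.mp hsort
    set s : ℝ := if x ∈ W then 1 else -1
    have hIH := ih hsortL (fun y hy => hf y (List.mem_cons_of_mem x hy))
      (t := t + s) (c := f x) (fun m => by simpa [s, add_assoc] using ht (m + 1)) hxL
      (hf x List.mem_cons_self)
    have hsx : (if x ∈ W then f x else -f x) = s * f x := by by_cases hx : x ∈ W <;> simp [s, hx]
    have hcx : t * f x ≤ t * c :=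
      mul_le_mul_of_nonneg_left (hc x List.mem_cons_self) (by simpa using ht 0)
    rw [signedSum_cons, hsx]
    linarith

lemma signedSum_one_drop_nonpos {f : α → ℝ} {L : List α}
    (hsort : L.Pairwise fun a b => f b ≤ f a) (hf : ∀ x ∈ L, 0 ≤ f x)
    (hneg : ∀ j < L.length, signedSum W f (L.drop j) < 0) (j : ℕ) :
    signedSum W 1 (L.drop j) ≤ 0 := by
  induction L generalizing j with
  | nil => simp
  | cons x L ih =>
    obtain ⟨hxL, hsortL⟩ := List.pairwise_cons.mp hsort
    have ihL := ih hsortL (fun y hy => hf y (List.mem_cons_of_mem x hy))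
      (fun j hj => hneg (j + 1) (by simpa using hj))
    cases j with
    | succ j => exact ihL j
    | zero =>
      by_cases hx : x ∈ W
      · by_contra hpos
        -- every prefix of `L` has balance `> -1`, since its complementary suffix has balance `≤ 0`
        have hL : -1 < signedSum W 1 L := by simp [hx] at hpos; linarith
        have habel := signedSum_nonneg_of_take hsortL
          (fun y hy => hf y (List.mem_cons_of_mem x hy)) (t := 1) (c := f x)
          (fun m => by linarith [signedSum_take_add_drop (W := W) 1 L m, ihL m]) hxL
          (hf x List.mem_cons_self)
        have := hneg 0 (by simp)
        simp [hx] at this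
        linarith
      · have hL := ihL 0
        rw [List.drop_zero] at hL ⊢
        simp only [signedSum_cons, hx, if_false, Pi.one_apply]
        linarith

end SignedSum

section CutIndex

variable {α : Type*} [DecidableEq α] {lam : α → ℝ} {W : Finset α} {l : List α}

lemma half_wsum_le_wsum_inter_iff {L : List α} (hL : L.Nodup) :
    (1 / 2) * wsum lam L.toFinset ≤ wsum lam (W ∩ L.toFinset) ↔ 0 ≤ signedSum W lam L := by
  rw [signedSum_eq_of_nodup lam hL, wsum, wsum, Finset.inter_comm]
  constructor <;> intro h <;> linarith

lemma cutIndex_mem (lam : α → ℝ) (W : Finset α) (l : List α) :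
    cutIndex lam W l ∈
      {k : ℕ | (1 / 2) * wsum lam (l.drop k).toFinset ≤ wsum lam (W ∩ (l.drop k).toFinset)} :=
  Nat.sInf_mem ⟨l.length, by simp [wsum]⟩

lemma signedSum_drop_take_cutIndex_neg (hnd : l.Nodup) {j : ℕ} (hj : j < cutIndex lam W l) :
    signedSum W lam ((l.take (cutIndex lam W l)).drop j) < 0 := by
  have hkpos : 0 ≤ signedSum W lam (l.drop (cutIndex lam W l)) :=
    (half_wsum_le_wsum_inter_iff (hnd.sublist (List.drop_sublist _ _))).mp (cutIndex_mem lam W l)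
  have hjneg : signedSum W lam (l.drop j) < 0 := by
    have := Nat.notMem_of_lt_sInf hj
    rw [Set.mem_ofPred_eq, half_wsum_le_wsum_inter_iff (hnd.sublist (List.drop_sublist _ _))]
      at this
    exact not_le.mp this
  have hsplit : l.drop j = (l.take (cutIndex lam W l)).drop j ++ l.drop (cutIndex lam W l) := by
    have hdrop : l.drop (cutIndex lam W l) = (l.drop j).drop (cutIndex lam W l - j) := by
      rw [List.drop_drop, Nat.add_sub_cancel' hj.le]
    rw [List.drop_take, hdrop, List.take_append_drop]
  rw [hsplit, signedSum_append] at hjneg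
  linarith

end CutIndex

theorem large_weight_small_intersection_general {α : Type*} [DecidableEq α]
    (lam : α → ℝ) (h01 : ∀ x, 0 ≤ lam x ∧ lam x ≤ 1)
    (l : List α) (hnd : l.Nodup) (hsorted : l.Pairwise fun a b => lam b ≤ lam a)
    (W : Finset α) :
    (((l.take (cutIndex lam W l)).toFinset ∩ W).card : ℝ)
      ≤ (1 / 2) * ((l.take (cutIndex lam W l)).toFinset.card : ℝ) := by
  set L := l.take (cutIndex lam W l)
  have hbalance : signedSum W 1 L ≤ 0 := by
    simpa using signedSum_one_drop_nonpos (hsorted.sublist (List.take_sublist _ _))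
      (fun x _ => (h01 x).1)
      (fun j hj => signedSum_drop_take_cutIndex_neg hnd (lt_of_lt_of_le hj (by simp)))
      0
  rw [signedSum_eq_of_nodup 1 (hnd.sublist (List.take_sublist _ _))] at hbalance
  simp only [Pi.one_apply, Finset.sum_const, nsmul_eq_mul, mul_one] at hbalance
  linarith

theorem large_weight_small_intersection {α : Type*} [Fintype α] [DecidableEq α]
    (lam : α → ℝ) (h01 : ∀ x, 0 ≤ lam x ∧ lam x ≤ 1)
    (l : List α) (hnd : l.Nodup) (hsorted : l.Pairwise fun a b => lam b ≤ lam a)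
    (W : Finset α) :
    (((l.take (cutIndex lam W l)).toFinset ∩ W).card : ℝ)
      ≤ (1 / 2) * ((l.take (cutIndex lam W l)).toFinset.card : ℝ) :=
  large_weight_small_intersection_general lam h01 l hnd hsorted W
end

section
/- Let X be a finite set and H ⊆ 2^X with weight vectors λ_H : X → [0,1] supported on H satisfying ∑_{x∈H} λ_H(x) ≥ 1 for each H ∈ H. Let W = (W_1,…,W_s) be a tuple of subsets of X which is bad, i.e. ∑_{x ∈ (W_1 ∪ … ∪ W_s) ∩ H} λ_H(x) < 1 − 2^{−s} for every H ∈ H. Then every tower of fragments (T_1,…,T_s) of (W,H) for any H ∈ H is nonempty, in the sense that ∑_{i=1}^s |T_i| > 0. -/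
open Finset

variable {α : Type*}

open scoped Classical

/-! Each step of the procedure keeps at most half of the current weight, since the cut is placed
where `W` holds at least half of the remaining weight, and everything it discards lies in the
fragment `R_i` or in `W_i`. After `s` steps the sets `R_i ∪ W_i` therefore capture a
`1 - 2^{-s}` fraction of the weight of `H'`. A tower of empty fragments makes `W'_i ⊆ W_i` and
`R_i ⊆ W_i`, so `W` itself would capture that much weight of some `H' ∈ ℋ`, contradicting badness. -/

lemma wsum_mono {lam : α → ℝ} (hlam : ∀ x, 0 ≤ lam x) {A B : Finset α} (hAB : A ⊆ B) :
    wsum lam A ≤ wsum lam B :=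
  sum_le_sum_of_subset_of_nonneg hAB fun x _ _ => hlam x

section Procedure

variable [DecidableEq α] (lam : α → ℝ)

lemma cutIndex_spec (W : Finset α) (l : List α) :
    (1 / 2) * wsum lam (l.drop (cutIndex lam W l)).toFinset ≤
      wsum lam (W ∩ (l.drop (cutIndex lam W l)).toFinset) :=
  Nat.sInf_mem (s := {k | (1 / 2) * wsum lam (l.drop k).toFinset ≤
      wsum lam (W ∩ (l.drop k).toFinset)}) ⟨l.length, by simp [wsum]⟩

lemma toFinset_stepList (W : Finset α) (l : List α) :
    (stepList lam W l).toFinset = (l.drop (cutIndex lam W l)).toFinset \ W := by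
  ext x
  simp [stepList]

lemma wsum_stepList_le (hlam : ∀ x, 0 ≤ lam x) (W : Finset α) (l : List α) :
    wsum lam (stepList lam W l).toFinset ≤ (1 / 2) * wsum lam l.toFinset := by
  set D := (l.drop (cutIndex lam W l)).toFinset
  have hsplit : wsum lam (W ∩ D) + wsum lam (D \ W) = wsum lam D := by
    rw [inter_comm]; exact sum_inter_add_sum_sdiff D W lam
  have hDl : wsum lam D ≤ wsum lam l.toFinset :=
    wsum_mono hlam fun x hx => List.mem_toFinset.2 <|
      List.drop_subset _ _ (List.mem_toFinset.1 hx)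
  rw [toFinset_stepList]
  linarith [cutIndex_spec lam W l]

lemma toFinset_sdiff_stepList_subset (W : Finset α) (l : List α) :
    l.toFinset \ (stepList lam W l).toFinset ⊆ (l.take (cutIndex lam W l)).toFinset ∪ W := by
  rw [toFinset_stepList, ← List.take_append_drop (cutIndex lam W l) l, List.toFinset_append,
    List.take_append_drop]
  intro x
  simp only [mem_sdiff, mem_union, not_and, not_not]
  tauto

variable (Ws : ℕ → Finset α) (l0 : List α)

lemma wsum_procList_le (hlam : ∀ x, 0 ≤ lam x) (n : ℕ) :
    wsum lam (procList lam Ws l0 n).toFinset ≤ (1 / 2) ^ n * wsum lam l0.toFinset := by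
  induction n with
  | zero => simp [procList]
  | succ n ih =>
    calc wsum lam (procList lam Ws l0 (n + 1)).toFinset
        ≤ (1 / 2) * wsum lam (procList lam Ws l0 n).toFinset :=
          wsum_stepList_le lam hlam (Ws n) _
      _ ≤ (1 / 2) * ((1 / 2) ^ n * wsum lam l0.toFinset) := by gcongr
      _ = (1 / 2) ^ (n + 1) * wsum lam l0.toFinset := by ring

lemma toFinset_sdiff_procList_subset (n : ℕ) :
    l0.toFinset \ (procList lam Ws l0 n).toFinset ⊆
      (range n).biUnion fun i => Rfrag lam Ws l0 i ∪ Ws i := by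
  induction n with
  | zero => simp [procList]
  | succ n ih =>
    intro x hx
    rw [mem_sdiff] at hx
    rw [range_add_one, biUnion_insert]
    by_cases hxn : x ∈ (procList lam Ws l0 n).toFinset
    · exact mem_union_left _ <|
        toFinset_sdiff_stepList_subset lam (Ws n) _ (mem_sdiff.2 ⟨hxn, hx.2⟩)
    · exact mem_union_right _ <| ih (mem_sdiff.2 ⟨hx.1, hxn⟩)

theorem one_sub_half_pow_mul_wsum_le (hlam : ∀ x, 0 ≤ lam x) (n : ℕ) :
    (1 - (1 / 2) ^ n) * wsum lam l0.toFinset ≤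
      wsum lam (((range n).biUnion fun i => Rfrag lam Ws l0 i ∪ Ws i) ∩ l0.toFinset) := by
  set L := (procList lam Ws l0 n).toFinset
  have hsplit : wsum lam (l0.toFinset ∩ L) + wsum lam (l0.toFinset \ L) =
      wsum lam l0.toFinset :=
    sum_inter_add_sum_sdiff _ _ lam
  have hkept : wsum lam (l0.toFinset ∩ L) ≤ (1 / 2) ^ n * wsum lam l0.toFinset :=
    (wsum_mono hlam inter_subset_right).trans (wsum_procList_le lam Ws l0 hlam n)
  have hdiscarded : wsum lam (l0.toFinset \ L) ≤
      wsum lam (((range n).biUnion fun i => Rfrag lam Ws l0 i ∪ Ws i) ∩ l0.toFinset) :=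
    wsum_mono hlam <| subset_inter (toFinset_sdiff_procList_subset lam Ws l0 n)
      sdiff_subset
  linarith

end Procedure

lemma extT_of_lt {s : ℕ} (Ws : Fin s → Finset α) {i : ℕ} (hi : i < s) :
    extT Ws i = Ws ⟨i, hi⟩ :=
  dif_pos hi

theorem bad_implies_tower_nonempty_general {α : Type*} [DecidableEq α]
    (ℋ : Finset (Finset α)) (lam : Finset α → α → ℝ)
    (hlam01 : ∀ H ∈ ℋ, ∀ x, 0 ≤ lam H x ∧ lam H x ≤ 1)
    (hone : ∀ H ∈ ℋ, 1 ≤ ∑ x ∈ H, lam H x)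
    (ord : Finset α → List α) (hord : ∀ H ∈ ℋ, IsOrdering (lam H) H (ord H))
    {s : ℕ} (Ws : Fin s → Finset α) (hbad : IsBad ℋ lam Ws) :
    ∀ H ∈ ℋ, ∀ T : Fin s → Finset α, IsTower ℋ lam ord Ws H T →
      0 < ∑ i : Fin s, (T i).card := by
  intro H _ T hT
  by_contra! hzero
  have hempty : ∀ i, T i = ∅ := fun i =>
    card_eq_zero.1 (sum_eq_zero_iff.1 (Nat.le_zero.1 hzero) i (mem_univ i))
  obtain ⟨⟨-, W', H', hH', hW', -, hR⟩, -⟩ := hT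
  simp only [hempty, union_empty] at hW' hR
  have hcover : ((range s).biUnion fun i => Rfrag (lam H') (extT W') (ord H') i ∪ extT W' i) ⊆
      univ.biUnion Ws := by
    refine biUnion_subset.2 fun i hi => ?_
    have hi : i < s := mem_range.1 hi
    rw [extT_of_lt W' hi]
    exact (union_subset (hR ⟨i, hi⟩) (hW' ⟨i, hi⟩).1).trans (subset_biUnion_of_mem _ (mem_univ _))
  have hlam : ∀ x, 0 ≤ lam H' x := fun x => (hlam01 H' hH' x).1
  have hcapture : (1 - (1 / 2) ^ s) * wsum (lam H') H' ≤ wsum (lam H') (univ.biUnion Ws ∩ H') := by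
    have h := one_sub_half_pow_mul_wsum_le (lam H') (extT W') (ord H') hlam s
    rw [(hord H' hH').2.1] at h
    exact h.trans (wsum_mono hlam (inter_subset_inter_right hcover))
  have hweight : 1 - (1 / 2 : ℝ) ^ s ≤ (1 - (1 / 2) ^ s) * wsum (lam H') H' :=
    le_mul_of_one_le_right (sub_nonneg.2 (pow_le_one₀ (by norm_num) (by norm_num))) (hone H' hH')
  exact (hbad H' hH').not_ge (hweight.trans hcapture)

theorem bad_implies_tower_nonempty {α : Type*} [Fintype α] [DecidableEq α]
    (ℋ : Finset (Finset α)) (lam : Finset α → α → ℝ)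
    (hlam01 : ∀ H ∈ ℋ, ∀ x, 0 ≤ lam H x ∧ lam H x ≤ 1)
    (hsupp : ∀ H ∈ ℋ, ∀ x ∉ H, lam H x = 0)
    (hone : ∀ H ∈ ℋ, 1 ≤ ∑ x ∈ H, lam H x)
    (ord : Finset α → List α) (hord : ∀ H ∈ ℋ, IsOrdering (lam H) H (ord H))
    {s : ℕ} (Ws : Fin s → Finset α) (hbad : IsBad ℋ lam Ws) :
    ∀ H ∈ ℋ, ∀ T : Fin s → Finset α, IsTower ℋ lam ord Ws H T →
      0 < ∑ i : Fin s, (T i).card :=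
  bad_implies_tower_nonempty_general ℋ lam hlam01 hone ord hord Ws hbad
end

section
/- Let X be a finite set, t a positive integer, and w : 2^X → [0,1] a function supported on nonempty sets of size at most t; write W for the support of w. Let H ⊆ X satisfy ∑_{W ∈ W : W ⊆ H} w(W) ≥ 1, and define λ_H : X → [0,1] by λ_H(x) = ( ∑_{W ∈ W : x ∈ W, W ⊆ H} w(W)/|W| ) / ( ∑_{W ∈ W : W ⊆ H} w(W) ). Then ∑_{x∈H} λ_H(x) = 1, and for every S ⊆ X, ∑_{x ∈ S ∩ H} λ_H(x) ≤ 1 − 1/t + ( ∑_{W ∈ W : W ⊆ H ∩ S} w(W) ) / ( t · ∑_{W ∈ W : W ⊆ H} w(W) ). -/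
open Finset

variable {α : Type*}

/-!
Double counting gives `∑_{x ∈ S} λ_H(x) = ∑_{W ⊆ H} (|S ∩ W| / |W|) w(W) / ∑_{W ⊆ H} w(W)`.
A set `W ⊆ S` contributes its full weight, while a set `W ⊄ S` meets `S` in at most `|W| - 1`
points, so its ratio is at most `1 - 1/|W| ≤ 1 - 1/t`.
-/

section FractionalWeight

variable [DecidableEq α]

theorem card_inter_div_card_le_one_sub_inv {S W : Finset α} {t : ℕ} (hWS : ¬W ⊆ S)
    (hW : W.Nonempty) (hWt : #W ≤ t) :
    (#(S ∩ W) : ℝ) / #W ≤ 1 - 1 / t := by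
  have hW0 : (0 : ℝ) < #W := by exact_mod_cast hW.card_pos
  have hlt : #(S ∩ W) + 1 ≤ #W :=
    card_lt_card (ssubset_of_subset_of_ne inter_subset_right (by rwa [Ne, inter_eq_right]))
  have hle : (#(S ∩ W) : ℝ) ≤ #W - 1 := by
    rw [le_sub_iff_add_le]; exact_mod_cast hlt
  calc (#(S ∩ W) : ℝ) / #W ≤ (#W - 1) / #W := by gcongr
    _ = 1 - 1 / #W := by rw [sub_div, div_self hW0.ne']
    _ ≤ 1 - 1 / t := by gcongr

noncomputable def fracWeight (w : Finset α → ℝ) (𝒲 : Finset (Finset α)) (x : α) : ℝ :=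
  ∑ W ∈ 𝒲 with x ∈ W, w W / #W

variable {w : Finset α → ℝ} {𝒲 : Finset (Finset α)}

theorem sum_fracWeight (T : Finset α) :
    ∑ x ∈ T, fracWeight w 𝒲 x = ∑ W ∈ 𝒲, (#(T ∩ W) : ℝ) / #W * w W := by
  simp only [fracWeight, sum_filter]
  rw [sum_comm]
  refine sum_congr rfl fun W _ => ?_
  rw [sum_ite_mem, sum_const, nsmul_eq_mul]
  ring

theorem sum_fracWeight_of_subset {T : Finset α} (hw : w ∅ = 0) (hT : ∀ W ∈ 𝒲, W ⊆ T) :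
    ∑ x ∈ T, fracWeight w 𝒲 x = ∑ W ∈ 𝒲, w W := by
  rw [sum_fracWeight]
  refine sum_congr rfl fun W hW => ?_
  obtain rfl | hne := W.eq_empty_or_nonempty
  · simp [hw]
  · have hW0 : (#W : ℝ) ≠ 0 := by exact_mod_cast hne.card_pos.ne'
    rw [inter_eq_right.mpr (hT W hW), div_self hW0, one_mul]

theorem sum_fracWeight_le {t : ℕ} (hw0 : ∀ W, 0 ≤ w W)
    (hsupp : ∀ W : Finset α, (W = ∅ ∨ t < #W) → w W = 0) (S : Finset α) :
    ∑ x ∈ S, fracWeight w 𝒲 x ≤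
      (1 - 1 / t) * ∑ W ∈ 𝒲, w W + (∑ W ∈ 𝒲 with W ⊆ S, w W) / t := by
  have hterm : ∀ W ∈ 𝒲, (#(S ∩ W) : ℝ) / #W * w W ≤
      (1 - 1 / t) * w W + if W ⊆ S then w W / t else 0 := by
    intro W _
    by_cases hw : w W = 0
    · simp [hw]
    have hW : W.Nonempty := nonempty_iff_ne_empty.mpr fun h => hw (hsupp W (Or.inl h))
    have hWt : #W ≤ t := not_lt.mp fun h => hw (hsupp W (Or.inr h))
    by_cases hWS : W ⊆ S
    · have hW0 : (#W : ℝ) ≠ 0 := by exact_mod_cast hW.card_pos.ne'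
      rw [if_pos hWS, inter_eq_right.mpr hWS, div_self hW0]
      exact le_of_eq (by ring)
    · rw [if_neg hWS, add_zero]
      exact mul_le_mul_of_nonneg_right (card_inter_div_card_le_one_sub_inv hWS hW hWt) (hw0 W)
  calc ∑ x ∈ S, fracWeight w 𝒲 x
      ≤ ∑ W ∈ 𝒲, ((1 - 1 / t) * w W + if W ⊆ S then w W / t else 0) := by
        rw [sum_fracWeight]; exact sum_le_sum hterm
    _ = (1 - 1 / t) * ∑ W ∈ 𝒲, w W + (∑ W ∈ 𝒲 with W ⊆ S, w W) / t := by
        rw [sum_add_distrib, ← mul_sum, ← sum_filter, sum_div]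

end FractionalWeight

open scoped Classical

theorem weight_vector_from_fractional_cover_general {α : Type*} [DecidableEq α]
    (t : ℕ)
    (w : Finset α → ℝ) (hw01 : ∀ W, 0 ≤ w W ∧ w W ≤ 1)
    (hsupp : ∀ W : Finset α, (W = ∅ ∨ t < W.card) → w W = 0)
    (H : Finset α) (hcov : 1 ≤ ∑ W ∈ H.powerset, w W)
    (lamH : α → ℝ)
    (hlamH : ∀ x, lamH x =
      (∑ W ∈ H.powerset.filter (fun W => x ∈ W), w W / (W.card : ℝ)) /
        (∑ W ∈ H.powerset, w W)) :
    (∑ x ∈ H, lamH x = 1) ∧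
      ∀ S : Finset α, ∑ x ∈ S ∩ H, lamH x ≤
        1 - 1 / (t : ℝ) +
          (∑ W ∈ (H ∩ S).powerset, w W) / ((t : ℝ) * ∑ W ∈ H.powerset, w W) := by
  set D := ∑ W ∈ H.powerset, w W
  have hD : 0 < D := one_pos.trans_le hcov
  have hsum : ∀ T, ∑ x ∈ T, lamH x = (∑ x ∈ T, fracWeight w H.powerset x) / D := by
    intro T; simp only [hlamH, fracWeight, sum_div]
  refine ⟨?_, fun S => ?_⟩
  · rw [hsum, sum_fracWeight_of_subset (hsupp ∅ (Or.inl rfl)) fun W => mem_powerset.mp,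
      div_self hD.ne']
  · have hfilter : ∑ W ∈ H.powerset with W ⊆ S ∩ H, w W = ∑ W ∈ (H ∩ S).powerset, w W := by
      congr 1; ext W; simp only [mem_filter, mem_powerset, subset_inter_iff]; tauto
    calc ∑ x ∈ S ∩ H, lamH x
        ≤ ((1 - 1 / t) * D + (∑ W ∈ (H ∩ S).powerset, w W) / t) / D := by
          rw [hsum, ← hfilter]
          exact div_le_div_of_nonneg_right (sum_fracWeight_le (fun W => (hw01 W).1) hsupp _) hD.le
      _ = 1 - 1 / t + (∑ W ∈ (H ∩ S).powerset, w W) / (t * D) := by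
          rw [add_div, mul_div_cancel_right₀ _ hD.ne', div_div]

theorem weight_vector_from_fractional_cover {α : Type*} [Fintype α] [DecidableEq α]
    (t : ℕ) (ht : 0 < t)
    (w : Finset α → ℝ) (hw01 : ∀ W, 0 ≤ w W ∧ w W ≤ 1)
    (hsupp : ∀ W : Finset α, (W = ∅ ∨ t < W.card) → w W = 0)
    (H : Finset α) (hcov : 1 ≤ ∑ W ∈ H.powerset, w W)
    (lamH : α → ℝ)
    (hlamH : ∀ x, lamH x =
      (∑ W ∈ H.powerset.filter (fun W => x ∈ W), w W / (W.card : ℝ)) /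
        (∑ W ∈ H.powerset, w W)) :
    (∑ x ∈ H, lamH x = 1) ∧
      ∀ S : Finset α, ∑ x ∈ S ∩ H, lamH x ≤
        1 - 1 / (t : ℝ) +
          (∑ W ∈ (H ∩ S).powerset, w W) / ((t : ℝ) * ∑ W ∈ H.powerset, w W) :=
  weight_vector_from_fractional_cover_general t w hw01 hsupp H hcov lamH hlamH
end
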